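/- arXiv:2403.19644 — 2 statements merged into one kernel-verified Lean document; each statement's English description precedes it below -/
import Mathlib

section
/- Let B be an n×n complex matrix, let u ∈ ℂ^n be a unit vector, let λ₁, λ₂ ∈ ℂ and η₁, η₂ > 0. Define H_i = ((B−λ_i)*(B−λ_i) + η_i²)^{−1} and Ĥ_i = ((B−λ_i)*(I − u u*)(B−λ_i) + η_i²)^{−1} for i = 1, 2, and write ⟨X⟩ = n^{−1} Tr X. Then |⟨Ĥ₁ Ĥ₂⟩ − ⟨H₁ H₂⟩| ≤ 3 / (n η₁² η₂²). -/
open MeasureTheory ProbabilityTheory Matrix Filter Finset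
open scoped ComplexOrder

noncomputable section

namespace RMT

/-- Squared Euclidean norm of a complex vector. -/
def vnormSq {I : Type*} [Fintype I] (v : I → ℂ) : ℝ := ∑ i, ‖v i‖ ^ 2

/-- Squared Frobenius norm of a matrix. -/
def frobSq {I : Type*} [Fintype I] (T : Matrix I I ℂ) : ℝ := ∑ i, ∑ j, ‖T i j‖ ^ 2

/-- Hermitian inner product `x* y`. -/
def dotc {I : Type*} [Fintype I] (x y : I → ℂ) : ℂ := ∑ i, (starRingEnd ℂ) (x i) * y i

/-- Normalized trace `⟨X⟩ = N⁻¹ Tr X` (normalization `N` given explicitly). -/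
def ntrN {I : Type*} [Fintype I] (N : ℕ) (X : Matrix I I ℂ) : ℂ := (N : ℂ)⁻¹ * X.trace

/-- `H_z(η) = ((A-z)*(A-z) + η²)⁻¹`. -/
def Hm {n : ℕ} (A : Matrix (Fin n) (Fin n) ℂ) (z : ℂ) (η : ℝ) : Matrix (Fin n) (Fin n) ℂ :=
  ((A - z • 1)ᴴ * (A - z • 1) + ((η : ℂ) ^ 2) • 1)⁻¹

/-- `H̃_z(η) = ((A-z)(A-z)* + η²)⁻¹`. -/
def Htm {n : ℕ} (A : Matrix (Fin n) (Fin n) ℂ) (z : ℂ) (η : ℝ) : Matrix (Fin n) (Fin n) ℂ :=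
  ((A - z • 1) * (A - z • 1)ᴴ + ((η : ℂ) ^ 2) • 1)⁻¹

/-- Hermitization `ℋ_z = [[0, A-z],[(A-z)*, 0]]`. -/
def herm {n : ℕ} (A : Matrix (Fin n) (Fin n) ℂ) (z : ℂ) :
    Matrix (Fin n ⊕ Fin n) (Fin n ⊕ Fin n) ℂ :=
  Matrix.fromBlocks 0 (A - z • 1) (A - z • 1)ᴴ 0

/-- Resolvent of the Hermitization `G_z(η) = (ℋ_z - iη)⁻¹`. -/
def Gres {n : ℕ} (A : Matrix (Fin n) (Fin n) ℂ) (z : ℂ) (η : ℝ) :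
    Matrix (Fin n ⊕ Fin n) (Fin n ⊕ Fin n) ℂ :=
  (herm A z - ((η : ℂ) * Complex.I) • 1)⁻¹

/-- Imaginary part of a matrix, `Im M = (M - M*)/(2i)`. -/
def imMat {I : Type*} [Fintype I] [DecidableEq I] (M : Matrix I I ℂ) : Matrix I I ℂ :=
  (2 * Complex.I)⁻¹ • (M - Mᴴ)

/-- Off-diagonal block matrix `[[0, I],[0, 0]]`. -/
def E12 (n : ℕ) : Matrix (Fin n ⊕ Fin n) (Fin n ⊕ Fin n) ℂ := Matrix.fromBlocks 0 1 0 0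

/-- Off-diagonal block matrix `[[0, 0],[I, 0]]`. -/
def E21 (n : ℕ) : Matrix (Fin n ⊕ Fin n) (Fin n ⊕ Fin n) ℂ := Matrix.fromBlocks 0 0 1 0

/-- `(λ, u)` is an eigenvalue–unit-right-eigenvector pair of `M`. -/
def RightEigenpair {n : ℕ} (M : Matrix (Fin n) (Fin n) ℂ) (l : ℂ) (u : Fin n → ℂ) : Prop :=
  M.mulVec u = l • u ∧ vnormSq u = 1

/-- `(λ, v)` is an eigenvalue–unit-left-eigenvector pair of `M` (i.e. `v* M = λ v*`). -/
def LeftEigenpair {n : ℕ} (M : Matrix (Fin n) (Fin n) ℂ) (l : ℂ) (v : Fin n → ℂ) : Prop :=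
  Mᴴ.mulVec v = ((starRingEnd ℂ) l) • v ∧ vnormSq v = 1

/-- Operator-norm bound `‖T‖_op ≤ C`. -/
def OpBounded {I : Type*} [Fintype I] (T : Matrix I I ℂ) (C : ℝ) : Prop :=
  ∀ u : I → ℂ, vnormSq (T.mulVec u) ≤ C ^ 2 * vnormSq u

/-- Singular values of a square complex matrix, sorted in nondecreasing order. -/
def sortedSvals {N : ℕ} (B : Matrix (Fin N) (Fin N) ℂ) : Fin N → ℝ := fun i =>
  Real.sqrt (((Matrix.isHermitian_conjTranspose_mul_self B).eigenvalues ∘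
    Tuple.sort (Matrix.isHermitian_conjTranspose_mul_self B).eigenvalues) i)

/-- The second smallest singular value (junk value `0` if `N < 2`). -/
def secondSval {N : ℕ} (B : Matrix (Fin N) (Fin N) ℂ) : ℝ :=
  if h : 2 ≤ N then sortedSvals B ⟨1, by omega⟩ else 0

/-- `λ` is an eigenvalue of `M`. -/
def HasEigen {n : ℕ} (M : Matrix (Fin n) (Fin n) ℂ) (l : ℂ) : Prop :=
  (M - l • 1).det = 0

/-- The centered complex Gaussian law whose real and imaginary part are independent
real Gaussians of variance `v` (total variance `2v`). -/
def complexGaussianLaw (v : NNReal) : Measure ℂ :=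
  ((gaussianReal 0 v).prod (gaussianReal 0 v)).map (fun p => (p.1 : ℂ) + (p.2 : ℂ) * Complex.I)

instance {m n α : Type*} [MeasurableSpace α] : MeasurableSpace (Matrix m n α) :=
  inferInstanceAs (MeasurableSpace (m → n → α))

/-- `B` is a complex Ginibre matrix: independent entries, each a centered complex Gaussian
with variance `N⁻¹`. -/
def IsGinibre {Ω : Type*} [MeasurableSpace Ω] (μ : Measure Ω) (N : ℕ)
    (B : Ω → Matrix (Fin N) (Fin N) ℂ) : Prop :=
  Measurable B ∧
  iIndepFun (fun (p : Fin N × Fin N) ω => B ω p.1 p.2) μ ∧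
  ∀ i j, μ.map (fun ω => B ω i j) = complexGaussianLaw ((2 * N : NNReal))⁻¹

/-- A sequence of `N × N` i.i.d. matrices: independent entries, mean zero, variance `N⁻¹`,
and all moments bounded by `C_p N^{-p/2}` with `C_p` independent of `N`. -/
structure IsIIDMatrixSeq {Ω : ℕ → Type*} [∀ N, MeasurableSpace (Ω N)]
    (μ : ∀ N, Measure (Ω N)) (A : ∀ N, Ω N → Matrix (Fin N) (Fin N) ℂ) : Prop where
  meas : ∀ N, Measurable (A N)
  indep : ∀ N, iIndepFun
    (fun (p : Fin N × Fin N) ω => A N ω p.1 p.2) (μ N)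
  mean_zero : ∀ N, ∀ i j : Fin N, ∫ ω, A N ω i j ∂(μ N) = 0
  variance : ∀ N, ∀ i j : Fin N, ∫ ω, ‖A N ω i j‖ ^ 2 ∂(μ N) = (N : ℝ)⁻¹
  moments : ∀ p : ℕ, ∃ C : ℝ, ∀ N, ∀ i j : Fin N,
    ∫ ω, ‖A N ω i j‖ ^ p ∂(μ N) ≤ C * (N : ℝ) ^ (-(p : ℝ) / 2)

/-- Stochastic domination `X ≺ Y` for sequences of nonnegative random quantities. -/
def StochDom {Ω : ℕ → Type*} [∀ N, MeasurableSpace (Ω N)] (μ : ∀ N, Measure (Ω N))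
    (X Y : ∀ N, Ω N → ℝ) : Prop :=
  ∀ ε > (0 : ℝ), ∀ D > (0 : ℝ), ∃ N₀ : ℕ, ∀ N ≥ N₀,
    μ N {ω | (N : ℝ) ^ ε * Y N ω < X N ω} ≤ ENNReal.ofReal ((N : ℝ) ^ (-D))

/-- The uniform (rotation invariant) probability measure on the unit sphere of `ℂⁿ`,
realized as a measure on `Fin n → ℂ`: the pushforward of an isotropic complex Gaussian
under normalization `v ↦ v / ‖v‖`. -/
def sphereUniform (n : ℕ) : Measure (Fin n → ℂ) :=
  (Measure.pi fun _ : Fin n => complexGaussianLaw 1).map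
    (fun v => (Real.sqrt (vnormSq v))⁻¹ • v)

/-- The probability measure on the unit sphere of `ℂⁿ` with density proportional to
`exp (f u)` with respect to the uniform surface measure. -/
def gibbsSphere (n : ℕ) (f : (Fin n → ℂ) → ℝ) : Measure (Fin n → ℂ) :=
  (((sphereUniform n).withDensity fun u => ENNReal.ofReal (Real.exp (f u))) Set.univ)⁻¹ •
    ((sphereUniform n).withDensity fun u => ENNReal.ofReal (Real.exp (f u)))

/-- The time parameter `t = N^{-1/3+ε₀}`. -/
def tN (N : ℕ) (ε₀ : ℝ) : ℝ := (N : ℝ) ^ (-(1 : ℝ) / 3 + ε₀)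

end RMT

namespace RMTaux
open RMT

variable {n : ℕ}

lemma vnormSq_nonneg (a : Fin n → ℂ) : 0 ≤ vnormSq a :=
  Finset.sum_nonneg fun _ _ => sq_nonneg _

lemma star_dot_self (a : Fin n → ℂ) : star a ⬝ᵥ a = (vnormSq a : ℂ) := by
  simp only [dotProduct, vnormSq, Complex.ofReal_sum, Pi.star_apply]
  refine Finset.sum_congr rfl fun i _ => ?_
  rw [Complex.star_def, ← Complex.normSq_eq_conj_mul_self]
  norm_cast
  rw [Complex.sq_norm]

lemma abs_dot_le (a b : Fin n → ℂ) :
    ‖star a ⬝ᵥ b‖ ≤ Real.sqrt (vnormSq a) * Real.sqrt (vnormSq b) := by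
  have h := norm_inner_le_norm (𝕜 := ℂ) (WithLp.toLp 2 a)
    (WithLp.toLp 2 b)
  rw [EuclideanSpace.inner_toLp_toLp, dotProduct_comm] at h
  simpa [EuclideanSpace.norm_eq, vnormSq] using h

lemma sqrt_bound {C : Matrix (Fin n) (Fin n) ℂ} {c : ℝ} (hc : 0 ≤ c)
    (h : ∀ v, vnormSq (C *ᵥ v) ≤ c ^ 2 * vnormSq v) (v : Fin n → ℂ) :
    Real.sqrt (vnormSq (C *ᵥ v)) ≤ c * Real.sqrt (vnormSq v) := by
  have := Real.sqrt_le_sqrt (h v)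
  rwa [Real.sqrt_mul (sq_nonneg c), Real.sqrt_sq hc] at this

lemma vnormSq_smul (c : ℂ) (y : Fin n → ℂ) : vnormSq (c • y) = ‖c‖ ^ 2 * vnormSq y := by
  unfold vnormSq
  rw [Finset.mul_sum]
  refine Finset.sum_congr rfl fun i _ => ?_
  simp [norm_smul, mul_pow]

lemma vecMulVec_mul (a b : Fin n → ℂ) (C : Matrix (Fin n) (Fin n) ℂ) :
    vecMulVec a b * C = vecMulVec a (b ᵥ* C) := by
  ext i j
  simp only [mul_apply, vecMulVec_apply, vecMul, dotProduct, Finset.mul_sum]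
  exact Finset.sum_congr rfl fun k _ => by ring

lemma mul_vecMulVec (C : Matrix (Fin n) (Fin n) ℂ) (a b : Fin n → ℂ) :
    C * vecMulVec a b = vecMulVec (C *ᵥ a) b := by
  ext i j
  simp only [mul_apply, vecMulVec_apply, mulVec, dotProduct, Finset.sum_mul]
  exact Finset.sum_congr rfl fun k _ => by ring

lemma vecMulVec_mulVec (a b v : Fin n → ℂ) :
    vecMulVec a b *ᵥ v = (b ⬝ᵥ v) • a := by
  ext i
  simp only [mulVec, vecMulVec_apply, dotProduct, Pi.smul_apply, smul_eq_mul, Finset.sum_mul]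
  exact Finset.sum_congr rfl fun k _ => by ring

lemma trace_vecMulVec_mul (a b : Fin n → ℂ) (C : Matrix (Fin n) (Fin n) ℂ) :
    (vecMulVec a b * C).trace = b ⬝ᵥ (C *ᵥ a) := by
  simp only [trace, diag_apply, mul_apply, vecMulVec_apply, dotProduct, mulVec, Finset.mul_sum]
  rw [Finset.sum_comm]
  exact Finset.sum_congr rfl fun k _ => Finset.sum_congr rfl fun i _ => by ring

lemma smul_one_posDef {η : ℝ} (hη : 0 < η) :
    (((η : ℂ) ^ 2) • (1 : Matrix (Fin n) (Fin n) ℂ)).PosDef := by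
  refine Matrix.PosDef.of_dotProduct_mulVec_pos ?_ ?_
  · have hst : star ((η : ℂ) ^ 2) = (η : ℂ) ^ 2 := by
      rw [Complex.star_def, ← Complex.ofReal_pow]
      exact Complex.conj_ofReal _
    unfold Matrix.IsHermitian
    rw [conjTranspose_smul, conjTranspose_one, hst]
  · intro x hx
    rw [smul_mulVec, one_mulVec, dotProduct_smul, star_dot_self, smul_eq_mul,
      ← Complex.ofReal_pow, ← Complex.ofReal_mul]
    rw [Complex.zero_lt_real]
    have : ∃ i, x i ≠ 0 := by
      by_contra h
      push_neg at h
      exact hx (funext h)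
    obtain ⟨i, hi⟩ := this
    have h1 : (0 : ℝ) < ‖x i‖ ^ 2 := pow_pos (norm_pos_iff.mpr hi) 2
    have h2 := Finset.single_le_sum (f := fun j => ‖x j‖ ^ 2)
      (fun j _ => sq_nonneg _) (Finset.mem_univ i)
    have h3 : 0 < vnormSq x := lt_of_lt_of_le h1 h2
    exact mul_pos (pow_pos hη 2) h3


lemma posSemidef_real_smul {A : Matrix (Fin n) (Fin n) ℂ} (hA : A.PosSemidef) {r : ℝ}
    (hr : 0 ≤ r) : (((r : ℂ)) • A).PosSemidef := by
  refine Matrix.PosSemidef.of_dotProduct_mulVec_nonneg ?_ ?_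
  · unfold Matrix.IsHermitian
    rw [conjTranspose_smul, hA.isHermitian, Complex.star_def, Complex.conj_ofReal]
  · intro x
    rw [smul_mulVec, dotProduct_smul, smul_eq_mul]
    have h := hA.dotProduct_mulVec_nonneg x
    rw [Complex.nonneg_iff] at h ⊢
    constructor
    · simp only [Complex.mul_re, Complex.ofReal_re, Complex.ofReal_im, zero_mul, sub_zero]
      exact mul_nonneg hr h.1
    · simp only [Complex.mul_im, Complex.ofReal_re, Complex.ofReal_im, zero_mul, add_zero]
      rw [← h.2, mul_zero]

lemma inv_mulVec_bound {A : Matrix (Fin n) (Fin n) ℂ} (hA : A.PosSemidef) {η : ℝ} (hη : 0 < η)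
    (v : Fin n → ℂ) :
    vnormSq ((A + ((η : ℂ) ^ 2) • 1)⁻¹ *ᵥ v) ≤ ((η ^ 2)⁻¹) ^ 2 * vnormSq v := by
  have hc : (((η ^ 2 : ℝ)) : ℂ) = (η : ℂ) ^ 2 := by push_cast; ring
  set M := A + ((η : ℂ) ^ 2) • 1 with hMdef
  have hM : M.PosDef := Matrix.PosDef.posSemidef_add hA (smul_one_posDef hη)
  have hdet : IsUnit M.det := (Matrix.isUnit_iff_isUnit_det M).1 hM.isUnit
  have hMl : M⁻¹ * M = 1 := Matrix.nonsing_inv_mul M hdet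
  have hMr : M * M⁻¹ = 1 := Matrix.mul_nonsing_inv M hdet
  have hMiH : (M⁻¹)ᴴ = M⁻¹ := hM.isHermitian.inv
  set K : Matrix (Fin n) (Fin n) ℂ :=
    A * A + ((η : ℂ) ^ 2) • A + ((η : ℂ) ^ 2) • A with hKdef
  have hK : K.PosSemidef := by
    have h1 : (A * A).PosSemidef := by
      have := Matrix.posSemidef_conjTranspose_mul_self A
      rwa [hA.isHermitian] at this
    have h2 : (((η : ℂ) ^ 2) • A).PosSemidef := by
      rw [← hc]; exact posSemidef_real_smul hA (by positivity)
    exact (h1.add h2).add h2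
  have hMM : M * M = A * A + ((η : ℂ) ^ 2) • A + ((η : ℂ) ^ 2) • A
      + ((η : ℂ) ^ 2 * (η : ℂ) ^ 2) • (1 : Matrix (Fin n) (Fin n) ℂ) := by
    rw [hMdef]
    simp only [add_mul, mul_add, smul_add, smul_mul_assoc, mul_smul_comm, smul_smul, mul_one, one_mul]
    abel
  have hKeq : K = M * M - ((η : ℂ) ^ 2 * (η : ℂ) ^ 2) • 1 := by
    rw [hKdef, hMM]
    abel
  have hL : M⁻¹ * K * M⁻¹ = 1 - ((η : ℂ) ^ 2 * (η : ℂ) ^ 2) • (M⁻¹ * M⁻¹) := by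
    rw [hKeq, mul_sub, sub_mul, mul_smul_comm, smul_mul_assoc, mul_one,
      ← mul_assoc M⁻¹ M M, hMl, one_mul, hMr]
  have hLpsd : (M⁻¹ * K * M⁻¹).PosSemidef := by
    have := hK.conjTranspose_mul_mul_same M⁻¹
    rwa [hMiH] at this
  have hq := hLpsd.dotProduct_mulVec_nonneg v
  rw [hL, sub_mulVec, dotProduct_sub, one_mulVec, star_dot_self, smul_mulVec,
    dotProduct_smul, smul_eq_mul, ← mulVec_mulVec, dotProduct_mulVec, ← hMiH,
    ← star_mulVec, hMiH, star_dot_self] at hq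
  have hq' : (0 : ℝ) ≤ vnormSq v - η ^ 2 * η ^ 2 * vnormSq (M⁻¹ *ᵥ v) := by
    rw [show (vnormSq v : ℂ) - (η : ℂ) ^ 2 * (η : ℂ) ^ 2 * (vnormSq (M⁻¹ *ᵥ v) : ℂ)
        = (((vnormSq v - η ^ 2 * η ^ 2 * vnormSq (M⁻¹ *ᵥ v) : ℝ)) : ℂ) by push_cast; ring] at hq
    exact Complex.zero_le_real.mp hq
  have hc4 : (0 : ℝ) < η ^ 2 * η ^ 2 := by positivity
  have : vnormSq (M⁻¹ *ᵥ v) ≤ vnormSq v / (η ^ 2 * η ^ 2) := by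
    rw [le_div_iff₀ hc4]
    linarith
  calc vnormSq (M⁻¹ *ᵥ v) ≤ vnormSq v / (η ^ 2 * η ^ 2) := this
    _ = ((η ^ 2)⁻¹) ^ 2 * vnormSq v := by
        rw [pow_two ((η ^ 2)⁻¹), ← mul_inv, div_eq_mul_inv, mul_comm]


lemma vecMul_vecMulVec (b a c : Fin n → ℂ) : b ᵥ* vecMulVec a c = (b ⬝ᵥ a) • c := by
  ext j
  simp only [vecMul, vecMulVec_apply, dotProduct, Pi.smul_apply, smul_eq_mul, Finset.sum_mul]
  exact Finset.sum_congr rfl fun k _ => by ring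

lemma proj_posSemidef (u : Fin n → ℂ) (hu : vnormSq u = 1) :
    ((1 : Matrix (Fin n) (Fin n) ℂ) - vecMulVec u (star u)).PosSemidef := by
  set P := vecMulVec u (star u) with hP
  have huC : star u ⬝ᵥ u = 1 := by rw [star_dot_self, hu, Complex.ofReal_one]
  have huC' : u ⬝ᵥ star u = 1 := by rw [dotProduct_comm]; exact huC
  have hP2 : P * P = P := by
    rw [hP, vecMulVec_mul, vecMul_vecMulVec, dotProduct_comm, huC', one_smul]
  have hPH : Pᴴ = P := by
    ext i j
    simp only [conjTranspose_apply, hP, vecMulVec_apply, Pi.star_apply, star_mul', star_star]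
    ring
  have hQH : ((1 : Matrix (Fin n) (Fin n) ℂ) - P)ᴴ = 1 - P := by
    rw [conjTranspose_sub, conjTranspose_one, hPH]
  have hQQ : ((1 : Matrix (Fin n) (Fin n) ℂ) - P)ᴴ * (1 - P) = 1 - P := by
    rw [hQH]
    have hexp : ((1 : Matrix (Fin n) (Fin n) ℂ) - P) * (1 - P) = 1 - P - (P - P * P) := by
      rw [sub_mul, mul_sub, mul_sub]
      simp only [one_mul, mul_one]
    rw [hexp, hP2, sub_self, sub_zero]
  have := Matrix.posSemidef_conjTranspose_mul_self ((1 : Matrix (Fin n) (Fin n) ℂ) - P)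
  rwa [hQQ] at this

lemma key (X : Matrix (Fin n) (Fin n) ℂ) (u : Fin n → ℂ) (hu : vnormSq u = 1)
    {η : ℝ} (hη : 0 < η) :
    ∃ x y : Fin n → ℂ,
      (Xᴴ * (1 - vecMulVec u (star u)) * X + ((η : ℂ) ^ 2) • 1)⁻¹
          - (Xᴴ * X + ((η : ℂ) ^ 2) • 1)⁻¹ = vecMulVec x (star y) ∧
      Real.sqrt (vnormSq x) * Real.sqrt (vnormSq y) ≤ (η ^ 2)⁻¹ := by
  classical
  set Q : Matrix (Fin n) (Fin n) ℂ := 1 - vecMulVec u (star u) with hQdef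
  have hQpsd := proj_posSemidef u hu
  rw [← hQdef] at hQpsd
  set Mh : Matrix (Fin n) (Fin n) ℂ := Xᴴ * Q * X + ((η : ℂ) ^ 2) • 1 with hMhdef
  set M : Matrix (Fin n) (Fin n) ℂ := Xᴴ * X + ((η : ℂ) ^ 2) • 1 with hMdef
  have hApsd : (Xᴴ * Q * X).PosSemidef := hQpsd.conjTranspose_mul_mul_same X
  have hA0 : (Xᴴ * X).PosSemidef := Matrix.posSemidef_conjTranspose_mul_self X
  have hMh : Mh.PosDef := Matrix.PosDef.posSemidef_add hApsd (smul_one_posDef hη)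
  have hM : M.PosDef := Matrix.PosDef.posSemidef_add hA0 (smul_one_posDef hη)
  have hdM : IsUnit M.det := (Matrix.isUnit_iff_isUnit_det M).1 hM.isUnit
  have hdMh : IsUnit Mh.det := (Matrix.isUnit_iff_isUnit_det Mh).1 hMh.isUnit
  have hMl : M⁻¹ * M = 1 := Matrix.nonsing_inv_mul M hdM
  have hMr : M * M⁻¹ = 1 := Matrix.mul_nonsing_inv M hdM
  have hMhl : Mh⁻¹ * Mh = 1 := Matrix.nonsing_inv_mul Mh hdMh
  have hMiH : (M⁻¹)ᴴ = M⁻¹ := hM.isHermitian.inv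
  set w : Fin n → ℂ := Xᴴ *ᵥ u with hw
  have hstarw : star w = star u ᵥ* X := by
    rw [hw, Matrix.star_mulVec, conjTranspose_conjTranspose]
  have hWdiff : M - Mh = vecMulVec w (star w) := by
    have h1 : M - Mh = Xᴴ * (vecMulVec u (star u)) * X := by
      rw [hMdef, hMhdef, hQdef, mul_sub, mul_one, sub_mul]
      abel
    rw [h1, mul_vecMulVec, vecMulVec_mul, ← hw, ← hstarw]
  set y : Fin n → ℂ := M⁻¹ *ᵥ w with hy
  set s : ℂ := star w ⬝ᵥ y with hs
  have hs0 : 0 ≤ s := by rw [hs, hy]; exact hM.inv.posSemidef.dotProduct_mulVec_nonneg w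
  set σ : ℝ := s.re with hσ
  have hσ0 : 0 ≤ σ := (Complex.nonneg_iff.mp hs0).1
  have him : s.im = 0 := ((Complex.nonneg_iff.mp hs0).2).symm
  have hsreal : s = ((σ : ℝ) : ℂ) := Complex.ext rfl (by simp [him])
  set t : ℝ := vnormSq y with ht
  have ht0 : 0 ≤ t := vnormSq_nonneg y
  have hMy : M *ᵥ y = w := by rw [hy, mulVec_mulVec, hMr, one_mulVec]
  have hyw : star y ⬝ᵥ w = s := by
    rw [hy, Matrix.star_mulVec, hMiH, ← dotProduct_mulVec]
  have hMhy : Mh *ᵥ y = ((1 : ℂ) - s) • w := by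
    have h2 : Mh = M - vecMulVec w (star w) := by rw [← hWdiff]; abel
    rw [h2, sub_mulVec, hMy, vecMulVec_mulVec, ← hs, sub_smul, one_smul]
  have hq := hApsd.dotProduct_mulVec_nonneg y
  have hXQX : Xᴴ * Q * X = Mh - ((η : ℂ) ^ 2) • 1 := by rw [hMhdef]; abel
  rw [hXQX, sub_mulVec, smul_mulVec, one_mulVec, dotProduct_sub, hMhy,
    dotProduct_smul, dotProduct_smul, hyw, star_dot_self, ← ht, smul_eq_mul, smul_eq_mul] at hq
  have hqR : (0 : ℝ) ≤ (1 - σ) * σ - η ^ 2 * t := by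
    have heq : ((1 : ℂ) - s) * s - (η : ℂ) ^ 2 * (t : ℂ)
        = (((1 - σ) * σ - η ^ 2 * t : ℝ) : ℂ) := by
      rw [hsreal]; push_cast; ring
    rw [heq] at hq
    exact Complex.zero_le_real.mp hq
  have hη2 : (0 : ℝ) < η ^ 2 := pow_pos hη 2
  have hσ1 : σ ≤ 1 := by nlinarith
  have hσlt : σ < 1 := by
    rcases lt_or_eq_of_le hσ1 with h | h
    · exact h
    · exfalso
      have ht0' : t = 0 := by nlinarith
      have hy0 : y = 0 := by
        funext i
        have hnn : ∀ j ∈ Finset.univ, (0 : ℝ) ≤ ‖y j‖ ^ 2 := fun j _ => sq_nonneg _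
        have hz := (Finset.sum_eq_zero_iff_of_nonneg hnn).mp (by rw [← vnormSq, ← ht]; exact ht0')
        have := hz i (Finset.mem_univ i)
        have : ‖y i‖ = 0 := by
          have := sq_eq_zero_iff.mp this
          exact this
        simpa using norm_eq_zero.mp this
      have hs00 : s = 0 := by rw [hs, hy0, dotProduct_zero]
      have : σ = 0 := by rw [hσ, hs00, Complex.zero_re]
      linarith
  have hp : (0 : ℝ) < 1 - σ := by linarith
  have h1s' : (1 : ℂ) - s ≠ 0 := by
    rw [hsreal]
    intro hcon
    have hcast : ((1 - σ : ℝ) : ℂ) = 0 := by push_cast; linear_combination hcon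
    exact hp.ne' (by exact_mod_cast hcast)
  set x : Fin n → ℂ := Mh⁻¹ *ᵥ w with hx
  have hxy : x = ((1 : ℂ) - s)⁻¹ • y := by
    have h2 : Mh *ᵥ (((1 : ℂ) - s)⁻¹ • y) = w := by
      rw [mulVec_smul, hMhy, smul_smul, inv_mul_cancel₀ h1s', one_smul]
    rw [hx, ← h2, mulVec_mulVec, hMhl, one_mulVec]
  refine ⟨x, y, ?_, ?_⟩
  · have hDiff : Mh⁻¹ - M⁻¹ = Mh⁻¹ * (M - Mh) * M⁻¹ := by
      rw [mul_sub, sub_mul, mul_assoc Mh⁻¹ M M⁻¹, hMr, mul_one, hMhl, one_mul]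
    have hstary : star y = star w ᵥ* M⁻¹ := by
      conv_lhs => rw [hy, Matrix.star_mulVec, hMiH]
    rw [hDiff, hWdiff, mul_vecMulVec, vecMulVec_mul, ← hx, ← hstary]
  · have hnorminv : ‖((1 : ℂ) - s)⁻¹‖ = (1 - σ)⁻¹ := by
      rw [hsreal, ← Complex.ofReal_one, ← Complex.ofReal_sub, ← Complex.ofReal_inv]
      rw [Complex.norm_real, Real.norm_eq_abs, abs_of_nonneg (le_of_lt (inv_pos.mpr hp))]
    have hvx : vnormSq x = ((1 - σ)⁻¹) ^ 2 * t := by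
      rw [hxy, vnormSq_smul, hnorminv, ← ht]
    have hsq : Real.sqrt (vnormSq x) * Real.sqrt (vnormSq y) = (1 - σ)⁻¹ * t := by
      rw [hvx, ← ht, Real.sqrt_mul (sq_nonneg _), Real.sqrt_sq (le_of_lt (inv_pos.mpr hp)),
        mul_assoc, Real.mul_self_sqrt ht0]
    rw [hsq, inv_mul_eq_div, div_le_iff₀ hp]
    have h5 : η ^ 2 * t ≤ 1 - σ := by nlinarith [sq_nonneg (1 - σ)]
    calc t = (η ^ 2)⁻¹ * (η ^ 2 * t) := by field_simp
      _ ≤ (η ^ 2)⁻¹ * (1 - σ) := mul_le_mul_of_nonneg_left h5 (le_of_lt (inv_pos.mpr hη2))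

end RMTaux

open RMT in
/-- removing a rank-one projection changes the normalized trace of the
product of the two resolvents by at most `3/(n η₁² η₂²)`. -/
theorem trace_two_resolvents_rank_one_perturbation
    (n : ℕ) (B : Matrix (Fin n) (Fin n) ℂ) (u : Fin n → ℂ) (hu : vnormSq u = 1)
    (l₁ l₂ : ℂ) (η₁ η₂ : ℝ) (hη₁ : 0 < η₁) (hη₂ : 0 < η₂) :
    ‖(ntrN n
            ((((B - l₁ • 1)ᴴ * (1 - Matrix.vecMulVec u (star u)) * (B - l₁ • 1)
                + ((η₁ : ℂ) ^ 2) • 1)⁻¹) *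
              (((B - l₂ • 1)ᴴ * (1 - Matrix.vecMulVec u (star u)) * (B - l₂ • 1)
                + ((η₂ : ℂ) ^ 2) • 1)⁻¹))
          - ntrN n (Hm B l₁ η₁ * Hm B l₂ η₂))‖
      ≤ 3 / (n * η₁ ^ 2 * η₂ ^ 2) := by
  classical
  rcases Nat.eq_zero_or_pos n with hn | hn
  · subst hn
    simp [RMT.ntrN]
  · have hn0 : ((n : ℝ)) ≠ 0 := by positivity
    have hη₁0 : (η₁ : ℝ) ≠ 0 := hη₁.ne'
    have hη₂0 : (η₂ : ℝ) ≠ 0 := hη₂.ne'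
    obtain ⟨x₁, y₁, hD₁, hb₁⟩ := RMTaux.key (B - l₁ • 1) u hu hη₁
    obtain ⟨x₂, y₂, hD₂, hb₂⟩ := RMTaux.key (B - l₂ • 1) u hu hη₂
    have hQ := RMTaux.proj_posSemidef u hu
    have hA2 : ((B - l₂ • 1)ᴴ * (1 - Matrix.vecMulVec u (star u)) * (B - l₂ • 1)).PosSemidef :=
      hQ.conjTranspose_mul_mul_same (B - l₂ • 1)
    have hA1 : ((B - l₁ • 1)ᴴ * (B - l₁ • 1)).PosSemidef :=
      Matrix.posSemidef_conjTranspose_mul_self (B - l₁ • 1)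
    have hGh2 := fun v => RMTaux.inv_mulVec_bound hA2 hη₂ v
    have hG1 := fun v => RMTaux.inv_mulVec_bound hA1 hη₁ v
    have h1 : ‖star y₁ ⬝ᵥ
        ((((B - l₂ • 1)ᴴ * (1 - Matrix.vecMulVec u (star u)) * (B - l₂ • 1)
          + ((η₂ : ℂ) ^ 2) • 1)⁻¹) *ᵥ x₁)‖ ≤ (η₁ ^ 2)⁻¹ * (η₂ ^ 2)⁻¹ := by
      calc _ ≤ Real.sqrt (vnormSq y₁) * Real.sqrt (vnormSq
            ((((B - l₂ • 1)ᴴ * (1 - Matrix.vecMulVec u (star u)) * (B - l₂ • 1)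
              + ((η₂ : ℂ) ^ 2) • 1)⁻¹) *ᵥ x₁)) := RMTaux.abs_dot_le _ _
        _ ≤ Real.sqrt (vnormSq y₁) * ((η₂ ^ 2)⁻¹ * Real.sqrt (vnormSq x₁)) := by
            exact mul_le_mul_of_nonneg_left
              (RMTaux.sqrt_bound (by positivity) hGh2 x₁) (Real.sqrt_nonneg _)
        _ = (η₂ ^ 2)⁻¹ * (Real.sqrt (vnormSq x₁) * Real.sqrt (vnormSq y₁)) := by ring
        _ ≤ (η₂ ^ 2)⁻¹ * (η₁ ^ 2)⁻¹ :=
            mul_le_mul_of_nonneg_left hb₁ (by positivity)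
        _ = (η₁ ^ 2)⁻¹ * (η₂ ^ 2)⁻¹ := by ring
    have h2 : ‖star y₂ ⬝ᵥ
        ((((B - l₁ • 1)ᴴ * (B - l₁ • 1) + ((η₁ : ℂ) ^ 2) • 1)⁻¹) *ᵥ x₂)‖
        ≤ (η₁ ^ 2)⁻¹ * (η₂ ^ 2)⁻¹ := by
      calc _ ≤ Real.sqrt (vnormSq y₂) * Real.sqrt (vnormSq
            ((((B - l₁ • 1)ᴴ * (B - l₁ • 1) + ((η₁ : ℂ) ^ 2) • 1)⁻¹) *ᵥ x₂)) :=
            RMTaux.abs_dot_le _ _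
        _ ≤ Real.sqrt (vnormSq y₂) * ((η₁ ^ 2)⁻¹ * Real.sqrt (vnormSq x₂)) := by
            exact mul_le_mul_of_nonneg_left
              (RMTaux.sqrt_bound (by positivity) hG1 x₂) (Real.sqrt_nonneg _)
        _ = (η₁ ^ 2)⁻¹ * (Real.sqrt (vnormSq x₂) * Real.sqrt (vnormSq y₂)) := by ring
        _ ≤ (η₁ ^ 2)⁻¹ * (η₂ ^ 2)⁻¹ :=
            mul_le_mul_of_nonneg_left hb₂ (by positivity)
    have hsplit : (((B - l₁ • 1)ᴴ * (1 - Matrix.vecMulVec u (star u)) * (B - l₁ • 1)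
          + ((η₁ : ℂ) ^ 2) • 1)⁻¹) *
        (((B - l₂ • 1)ᴴ * (1 - Matrix.vecMulVec u (star u)) * (B - l₂ • 1)
          + ((η₂ : ℂ) ^ 2) • 1)⁻¹)
        - ((B - l₁ • 1)ᴴ * (B - l₁ • 1) + ((η₁ : ℂ) ^ 2) • 1)⁻¹ *
          ((B - l₂ • 1)ᴴ * (B - l₂ • 1) + ((η₂ : ℂ) ^ 2) • 1)⁻¹
        = Matrix.vecMulVec x₁ (star y₁) *
            (((B - l₂ • 1)ᴴ * (1 - Matrix.vecMulVec u (star u)) * (B - l₂ • 1)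
              + ((η₂ : ℂ) ^ 2) • 1)⁻¹)
          + ((B - l₁ • 1)ᴴ * (B - l₁ • 1) + ((η₁ : ℂ) ^ 2) • 1)⁻¹ *
            Matrix.vecMulVec x₂ (star y₂) := by
      rw [← hD₁, ← hD₂]
      noncomm_ring
    simp only [RMT.ntrN, RMT.Hm]
    rw [← mul_sub, ← Matrix.trace_sub, hsplit, Matrix.trace_add,
      RMTaux.trace_vecMulVec_mul, Matrix.trace_mul_comm, RMTaux.trace_vecMulVec_mul,
      norm_mul, norm_inv, Complex.norm_natCast]
    have habs : ‖(star y₁ ⬝ᵥ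
          ((((B - l₂ • 1)ᴴ * (1 - Matrix.vecMulVec u (star u)) * (B - l₂ • 1)
            + ((η₂ : ℂ) ^ 2) • 1)⁻¹) *ᵥ x₁))
        + (star y₂ ⬝ᵥ
          ((((B - l₁ • 1)ᴴ * (B - l₁ • 1) + ((η₁ : ℂ) ^ 2) • 1)⁻¹) *ᵥ x₂))‖
        ≤ 2 * ((η₁ ^ 2)⁻¹ * (η₂ ^ 2)⁻¹) := by
      calc _ ≤ _ + _ := norm_add_le _ _
        _ ≤ (η₁ ^ 2)⁻¹ * (η₂ ^ 2)⁻¹ + (η₁ ^ 2)⁻¹ * (η₂ ^ 2)⁻¹ := add_le_add h1 h2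
        _ = 2 * ((η₁ ^ 2)⁻¹ * (η₂ ^ 2)⁻¹) := by ring
    calc ((n : ℝ))⁻¹ * ‖_‖ ≤ ((n : ℝ))⁻¹ * (2 * ((η₁ ^ 2)⁻¹ * (η₂ ^ 2)⁻¹)) :=
          mul_le_mul_of_nonneg_left habs (by positivity)
      _ = 2 / ((n : ℝ) * η₁ ^ 2 * η₂ ^ 2) := by
          field_simp
      _ ≤ 3 / ((n : ℝ) * η₁ ^ 2 * η₂ ^ 2) := by
          gcongr
          norm_num

end
end

section
/- Fix ε > 0, ℓ ∈ ℕ, and constants C₀ ≥ 1 and 0 < q_min ≤ q_max. There exist κ > 0, q₀ > 0 and C ≥ 1, depending only on ε, ℓ, C₀, q_min, q_max, such that the following holds for all sufficiently large N. Let H be an N×N positive semidefinite Hermitian matrix and t ∈ [N^{−1/3+ε}, 1] with t⟨H⟩ = 1, where ⟨H⟩ = N^{−1}Tr H. Let w_1, …, w_ℓ ∈ ℂ^N be orthonormal, q_1, …, q_ℓ ∈ [q_min, q_max], and suppose the matrix T satisfies T*T = Σ_{k=1}^{ℓ} q_k w_k w_k*. Assume the isotropic bounds |w_k* H w_m − δ_{km}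 ⟨H⟩| ≤ C₀ N^{−1/2} t^{−3/2} for all 1 ≤ k, m ≤ ℓ. Then for every 0 < q < q₀: | det(1 − t q H T*T)^{−1} − ∏_{k=1}^{ℓ} (1 − q q_k)^{−1} | ≤ C N^{−κ} ∏_{k=1}^{ℓ} (1 − q q_k)^{−1}. -/
open MeasureTheory ProbabilityTheory Matrix Filter Finset
open scoped ComplexOrder

noncomputable section

open Finset Filter

private lemma norm_prod_sub_prod_le'' {ι : Type*} (s : Finset ι) (a b : ι → ℂ) (R : ℝ)
    (hR : 1 ≤ R) (ha : ∀ i ∈ s, ‖a i‖ ≤ R) (hb : ∀ i ∈ s, ‖b i‖ ≤ R) :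
    ‖∏ i ∈ s, a i - ∏ i ∈ s, b i‖ ≤ (∑ i ∈ s, ‖a i - b i‖) * R ^ s.card := by
  classical
  induction s using Finset.induction_on with
  | empty => simp
  | @insert x s hx ih =>
    have ha' : ∀ i ∈ s, ‖a i‖ ≤ R := fun i hi => ha i (Finset.mem_insert_of_mem hi)
    have hb' : ∀ i ∈ s, ‖b i‖ ≤ R := fun i hi => hb i (Finset.mem_insert_of_mem hi)
    have ihs := ih ha' hb'
    have hR0 : (0:ℝ) ≤ R := le_trans zero_le_one hR
    have hprod : ‖∏ i ∈ s, a i‖ ≤ R ^ s.card := by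
      calc ‖∏ i ∈ s, a i‖ = ∏ i ∈ s, ‖a i‖ := norm_prod s a
        _ ≤ ∏ _i ∈ s, R := Finset.prod_le_prod (fun i _ => norm_nonneg _) ha'
        _ = R ^ s.card := by rw [Finset.prod_const]
    rw [Finset.prod_insert hx, Finset.prod_insert hx, Finset.sum_insert hx,
      Finset.card_insert_of_notMem hx]
    have key : a x * ∏ i ∈ s, a i - b x * ∏ i ∈ s, b i
        = (a x - b x) * ∏ i ∈ s, a i + b x * (∏ i ∈ s, a i - ∏ i ∈ s, b i) := by ring
    rw [key]
    have step1 : ‖(a x - b x) * ∏ i ∈ s, a i + b x * (∏ i ∈ s, a i - ∏ i ∈ s, b i)‖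
        ≤ ‖a x - b x‖ * R ^ s.card + R * ((∑ i ∈ s, ‖a i - b i‖) * R ^ s.card) := by
      refine (norm_add_le _ _).trans ?_
      rw [norm_mul, norm_mul]
      gcongr
      · exact hb x (Finset.mem_insert_self x s)
    refine step1.trans ?_
    have hd : 0 ≤ ‖a x - b x‖ := norm_nonneg _
    have hS : 0 ≤ ∑ i ∈ s, ‖a i - b i‖ := Finset.sum_nonneg fun i _ => norm_nonneg _
    have hr : (0:ℝ) ≤ R ^ s.card := pow_nonneg hR0 _
    rw [pow_succ]
    nlinarith [mul_nonneg (mul_nonneg hd hr) (sub_nonneg.mpr hR)]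

private lemma det_sub_det_bound' {ℓ : ℕ} (D B : Matrix (Fin ℓ) (Fin ℓ) ℂ) (R δ : ℝ)
    (hR : 1 ≤ R) (hδ : 0 ≤ δ)
    (hBe : ∀ k m, ‖B k m‖ ≤ R) (hDB : ∀ k m, ‖D k m - B k m‖ ≤ δ) :
    ‖D.det - B.det‖ ≤ (ℓ.factorial : ℝ) * ℓ * δ * (R + δ) ^ ℓ := by
  classical
  have hDe : ∀ k m, ‖D k m‖ ≤ R + δ := by
    intro k m
    have : D k m = B k m + (D k m - B k m) := by ring
    rw [this]
    exact (norm_add_le _ _).trans (add_le_add (hBe _ _) (hDB _ _))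
  have hRδ : 1 ≤ R + δ := le_trans hR (by linarith)
  rw [Matrix.det_apply, Matrix.det_apply, ← Finset.sum_sub_distrib]
  have hterm : ∀ σ : Equiv.Perm (Fin ℓ),
      ‖(Equiv.Perm.sign σ • ∏ i, D (σ i) i) - (Equiv.Perm.sign σ • ∏ i, B (σ i) i)‖
        ≤ (ℓ : ℝ) * δ * (R + δ) ^ ℓ := by
    intro σ
    rw [← smul_sub]
    have hnorm : ‖Equiv.Perm.sign σ • ((∏ i, D (σ i) i) - ∏ i, B (σ i) i)‖
        = ‖(∏ i, D (σ i) i) - ∏ i, B (σ i) i‖ := by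
      rcases Int.units_eq_one_or (Equiv.Perm.sign σ) with h | h <;> simp [h] <;>
        exact norm_sub_rev _ _
    rw [hnorm]
    have := norm_prod_sub_prod_le'' Finset.univ (fun i => D (σ i) i) (fun i => B (σ i) i)
      (R + δ) hRδ (fun i _ => hDe _ _) (fun i _ => by
        calc ‖B (σ i) i‖ ≤ R := hBe _ _
          _ ≤ R + δ := by linarith)
    refine this.trans ?_
    have hsum : (∑ i : Fin ℓ, ‖D (σ i) i - B (σ i) i‖) ≤ (ℓ : ℝ) * δ := by
      calc (∑ i : Fin ℓ, ‖D (σ i) i - B (σ i) i‖) ≤ ∑ _i : Fin ℓ, δ :=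
            Finset.sum_le_sum fun i _ => hDB _ _
        _ = (ℓ : ℝ) * δ := by simp [mul_comm]
    have hpow : (0:ℝ) ≤ (R + δ) ^ (Finset.univ : Finset (Fin ℓ)).card :=
      pow_nonneg (by linarith) _
    calc (∑ i : Fin ℓ, ‖D (σ i) i - B (σ i) i‖) * (R + δ) ^ (Finset.univ : Finset (Fin ℓ)).card
        ≤ ((ℓ : ℝ) * δ) * (R + δ) ^ (Finset.univ : Finset (Fin ℓ)).card := by
          exact mul_le_mul_of_nonneg_right hsum hpow
      _ = (ℓ : ℝ) * δ * (R + δ) ^ ℓ := by simp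
  calc ‖∑ σ : Equiv.Perm (Fin ℓ),
        ((Equiv.Perm.sign σ • ∏ i, D (σ i) i) - Equiv.Perm.sign σ • ∏ i, B (σ i) i)‖
      ≤ ∑ σ : Equiv.Perm (Fin ℓ), ‖(Equiv.Perm.sign σ • ∏ i, D (σ i) i)
          - Equiv.Perm.sign σ • ∏ i, B (σ i) i‖ := norm_sum_le _ _
    _ ≤ ∑ _σ : Equiv.Perm (Fin ℓ), (ℓ : ℝ) * δ * (R + δ) ^ ℓ :=
        Finset.sum_le_sum fun σ _ => hterm σ
    _ = (ℓ.factorial : ℝ) * ℓ * δ * (R + δ) ^ ℓ := by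
        rw [Finset.sum_const, Finset.card_univ, Fintype.card_perm, Fintype.card_fin]
        simp [nsmul_eq_mul]; ring


set_option maxHeartbeats 1000000 in
open RMT in
/-- asymptotics of `det(1 - t q H T*T)⁻¹` for a finite-rank `T*T` with
orthonormal eigenvectors satisfying isotropic bounds. -/
theorem det_one_sub_tqHTT_asymptotics
    (ε : ℝ) (hε : 0 < ε) (ℓ : ℕ) (C₀ : ℝ) (hC₀ : 1 ≤ C₀)
    (qmin qmax : ℝ) (hqmin : 0 < qmin) (hle : qmin ≤ qmax) :
    ∃ κ : ℝ, 0 < κ ∧ ∃ q₀ : ℝ, 0 < q₀ ∧ ∃ C : ℝ, 1 ≤ C ∧ ∃ N₀ : ℕ, ∀ N ≥ N₀,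
      ∀ H : Matrix (Fin N) (Fin N) ℂ, H.PosSemidef →
        ∀ t : ℝ, t ∈ Set.Icc ((N : ℝ) ^ (-(1 : ℝ) / 3 + ε)) 1 →
          (t : ℂ) * ntrN N H = 1 →
          ∀ w : Fin ℓ → (Fin N → ℂ),
            (∀ k k', dotc (w k) (w k') = if k = k' then 1 else 0) →
            ∀ q : Fin ℓ → ℝ, (∀ k, q k ∈ Set.Icc qmin qmax) →
              ∀ T : Matrix (Fin N) (Fin N) ℂ,
                Tᴴ * T = ∑ k, (q k : ℂ) • Matrix.vecMulVec (w k) (star (w k)) →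
                (∀ k m : Fin ℓ,
                  ‖dotc (w k) (H.mulVec (w m))
                      - (if k = m then 1 else 0) * ntrN N H‖
                    ≤ C₀ * (N : ℝ) ^ (-(1 : ℝ) / 2) * t ^ (-(3 : ℝ) / 2)) →
                ∀ qq : ℝ, 0 < qq → qq < q₀ →
                  ‖(Matrix.det (1 - ((t * qq : ℝ) : ℂ) • (H * (Tᴴ * T))))⁻¹
                        - ((∏ k, (1 - qq * q k)⁻¹ : ℝ) : ℂ)‖
                    ≤ C * (N : ℝ) ^ (-κ) * ∏ k, (1 - qq * q k)⁻¹ := by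
  classical
  have hqmax0 : 0 < qmax := lt_of_lt_of_le hqmin hle
  have hC₀0 : (0:ℝ) < C₀ := lt_of_lt_of_le one_pos hC₀
  set K' : ℝ := (ℓ.factorial : ℝ) * ℓ * 2 ^ ℓ * C₀ with hK'def
  have hK'0 : 0 ≤ K' := by positivity
  set K'' : ℝ := K' + C₀ with hK''def
  have hK''0 : 0 < K'' := by positivity
  have htend : Filter.Tendsto (fun N : ℕ => K'' * (N:ℝ) ^ (-(1:ℝ)/12)) Filter.atTop (nhds 0) := by
    have h1 : Filter.Tendsto (fun x : ℝ => x ^ (-(1/12 : ℝ))) Filter.atTop (nhds 0) :=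
      tendsto_rpow_neg_atTop (by norm_num)
    have h2 := (h1.comp (tendsto_natCast_atTop_atTop (R := ℝ))).const_mul K''
    have h3 : (fun N : ℕ => K'' * (N:ℝ) ^ (-(1:ℝ)/12))
        = fun N : ℕ => K'' * ((N:ℝ) ^ (-(1/12:ℝ))) := by norm_num
    rw [h3]
    simpa using h2
  have hev : ∀ᶠ N : ℕ in Filter.atTop, K'' * (N:ℝ) ^ (-(1:ℝ)/12) ≤ ((2:ℝ) ^ (ℓ+1))⁻¹ :=
    htend.eventually_le_const (by positivity)
  obtain ⟨N₀, hN₀⟩ := Filter.eventually_atTop.mp (hev.and (Filter.eventually_ge_atTop 1))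
  refine ⟨1/4, by norm_num, (2*qmax)⁻¹, by positivity, 1, le_rfl, N₀, ?_⟩
  intro N hN H _hH t ht htr w _hw q hq T hT hiso qq hqq0 hqq1
  have hcond := (hN₀ N hN).1
  have hN1 : 1 ≤ N := (hN₀ N hN).2
  have hN1R : (1:ℝ) ≤ (N:ℝ) := by exact_mod_cast hN1
  have hNpos : (0:ℝ) < N := by linarith
  have htpos : 0 < t := lt_of_lt_of_le (Real.rpow_pos_of_pos hNpos _) ht.1
  have hq2 : qq * qmax ≤ 1/2 := by
    have h1 := mul_lt_mul_of_pos_right hqq1 hqmax0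
    have h2 : (2*qmax)⁻¹ * qmax = 1/2 := by field_simp
    linarith
  have hfac : ∀ k, 1/2 ≤ 1 - qq * q k ∧ 1 - qq * q k ≤ 1 := by
    intro k
    have h1 : 0 < q k := lt_of_lt_of_le hqmin (hq k).1
    have h2 : qq * q k ≤ qq * qmax := mul_le_mul_of_nonneg_left (hq k).2 hqq0.le
    constructor
    · linarith
    · nlinarith [mul_pos hqq0 h1]
  set P : ℝ := ∏ k, (1 - qq * q k) with hPdef
  have hP_lb : ((2:ℝ)^ℓ)⁻¹ ≤ P := by
    have h1 : ∏ _k : Fin ℓ, (1/2 : ℝ) ≤ P :=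
      Finset.prod_le_prod (fun k _ => by norm_num) (fun k _ => (hfac k).1)
    have h2 : ∏ _k : Fin ℓ, (1/2 : ℝ) = ((2:ℝ)^ℓ)⁻¹ := by
      rw [Finset.prod_const, Finset.card_univ, Fintype.card_fin, one_div, inv_pow]
    linarith
  have hP_ub : P ≤ 1 := Finset.prod_le_one (fun k _ => by linarith [(hfac k).1])
    (fun k _ => (hfac k).2)
  have hPpos : 0 < P := lt_of_lt_of_le (by positivity) hP_lb
  -- matrices
  set g : Fin ℓ → Fin ℓ → ℂ := fun k m => dotc (w k) (H.mulVec (w m)) with hgdef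
  set Am : Matrix (Fin N) (Fin ℓ) ℂ :=
    Matrix.of fun i k => ((t*qq:ℝ):ℂ) * (q k : ℂ) * (H.mulVec (w k)) i with hAm
  set Bm : Matrix (Fin ℓ) (Fin N) ℂ := Matrix.of fun k j => (starRingEnd ℂ) (w k j) with hBm
  have hmulvv : ∀ (u v : Fin N → ℂ),
      H * Matrix.vecMulVec u v = Matrix.vecMulVec (H.mulVec u) v := by
    intro u v
    ext i j
    simp only [Matrix.mul_apply, Matrix.vecMulVec_apply, Matrix.mulVec, dotProduct]
    rw [Finset.sum_mul]
    exact Finset.sum_congr rfl fun p _ => by ring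
  have claim1 : ((t*qq:ℝ):ℂ) • (H * (Tᴴ * T)) = Am * Bm := by
    rw [hT, Matrix.mul_sum]
    simp_rw [Matrix.mul_smul, hmulvv]
    ext i j
    simp only [Matrix.smul_apply, Matrix.sum_apply, Matrix.mul_apply, smul_eq_mul,
      Finset.mul_sum]
    refine Finset.sum_congr rfl fun k _ => ?_
    simp only [Matrix.smul_apply, Matrix.vecMulVec_apply, hAm, hBm, Matrix.of_apply,
      smul_eq_mul, Pi.star_apply, Complex.star_def, Matrix.mulVec, dotProduct]
    ring
  have claim2 : (1 - ((t*qq:ℝ):ℂ) • (H * (Tᴴ * T))).det = (1 - Bm * Am).det := by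
    rw [claim1, Matrix.det_one_sub_mul_comm]
  set Dm : Matrix (Fin ℓ) (Fin ℓ) ℂ := 1 - Bm * Am with hDm
  have hDme : ∀ k m, Dm k m
      = (if k = m then 1 else 0) - ((qq * q m:ℝ):ℂ) * ((t:ℂ) * g k m) := by
    intro k m
    rw [hDm, Matrix.sub_apply, Matrix.one_apply, Matrix.mul_apply]
    congr 1
    calc ∑ j, Bm k j * Am j m
        = ∑ j, ((t*qq:ℝ):ℂ) * (q m:ℂ) * ((starRingEnd ℂ) (w k j) * (H.mulVec (w m)) j) :=
          Finset.sum_congr rfl fun j _ => by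
            simp only [hAm, hBm, Matrix.of_apply]; ring
      _ = ((t*qq:ℝ):ℂ) * (q m:ℂ) * ∑ j, (starRingEnd ℂ) (w k j) * (H.mulVec (w m)) j := by
          rw [Finset.mul_sum]
      _ = ((qq * q m:ℝ):ℂ) * ((t:ℂ) * g k m) := by
          rw [hgdef]; unfold dotc; push_cast; ring
  set Diag : Matrix (Fin ℓ) (Fin ℓ) ℂ :=
    Matrix.diagonal (fun k => ((1 - qq * q k : ℝ):ℂ)) with hDiag
  have hDiagdet : Diag.det = ((P:ℝ):ℂ) := by
    rw [hDiag, Matrix.det_diagonal, hPdef]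
    push_cast
    rfl
  set EN : ℝ := C₀ * (N:ℝ) ^ (-(1:ℝ)/3 - ε/2) with hENdef
  have hEN0 : 0 ≤ EN := by positivity
  have htEN : t * (C₀ * (N:ℝ) ^ (-(1:ℝ)/2) * t ^ (-(3:ℝ)/2)) ≤ EN := by
    have h1 : t * t ^ (-(3:ℝ)/2) = t ^ (-(1:ℝ)/2) := by
      rw [show (-(1:ℝ)/2) = 1 + (-(3:ℝ)/2) by norm_num, Real.rpow_add htpos, Real.rpow_one]
    have h2 : t ^ (-(1:ℝ)/2) ≤ ((N:ℝ) ^ (-(1:ℝ)/3 + ε)) ^ (-(1:ℝ)/2) :=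
      Real.rpow_le_rpow_of_nonpos (Real.rpow_pos_of_pos hNpos _) ht.1 (by norm_num)
    have h3 : ((N:ℝ) ^ (-(1:ℝ)/3 + ε)) ^ (-(1:ℝ)/2)
        = (N:ℝ) ^ ((-(1:ℝ)/3 + ε) * (-(1:ℝ)/2)) := (Real.rpow_mul hNpos.le _ _).symm
    have h4 : (N:ℝ) ^ (-(1:ℝ)/2) * (N:ℝ) ^ ((-(1:ℝ)/3 + ε) * (-(1:ℝ)/2))
        = (N:ℝ) ^ (-(1:ℝ)/3 - ε/2) := by
      rw [← Real.rpow_add hNpos]; congr 1; ring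
    have h5 : t ^ (-(1:ℝ)/2) ≤ (N:ℝ) ^ ((-(1:ℝ)/3 + ε) * (-(1:ℝ)/2)) := h2.trans_eq h3
    calc t * (C₀ * (N:ℝ)^(-(1:ℝ)/2) * t^(-(3:ℝ)/2))
        = C₀ * ((N:ℝ)^(-(1:ℝ)/2) * (t * t^(-(3:ℝ)/2))) := by ring
      _ = C₀ * ((N:ℝ)^(-(1:ℝ)/2) * t^(-(1:ℝ)/2)) := by rw [h1]
      _ ≤ C₀ * ((N:ℝ)^(-(1:ℝ)/2) * (N:ℝ)^((-(1:ℝ)/3+ε) * (-(1:ℝ)/2))) := by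
          have hnn : (0:ℝ) ≤ (N:ℝ)^(-(1:ℝ)/2) := by positivity
          exact mul_le_mul_of_nonneg_left (mul_le_mul_of_nonneg_left h5 hnn) hC₀0.le
      _ = EN := by rw [h4, hENdef]
  have hscal : ∀ k m, ‖(if k = m then (1:ℂ) else 0) - (t:ℂ) * g k m‖ ≤ EN := by
    intro k m
    have hkey : (if k = m then (1:ℂ) else 0) - (t:ℂ) * g k m
        = -((t:ℂ) * (g k m - (if k = m then 1 else 0) * ntrN N H)) := by
      linear_combination (-(if k = m then (1:ℂ) else 0)) * htr
    rw [hkey, norm_neg, norm_mul]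
    have hiso' := hiso k m
    calc ‖(t:ℂ)‖ * ‖g k m - (if k = m then 1 else 0) * ntrN N H‖
        ≤ t * (C₀ * (N:ℝ)^(-(1:ℝ)/2) * t^(-(3:ℝ)/2)) := by
          rw [Complex.norm_real, Real.norm_eq_abs, abs_of_pos htpos]
          exact mul_le_mul_of_nonneg_left hiso' htpos.le
      _ ≤ EN := htEN
  have hentry : ∀ k m, ‖Dm k m - Diag k m‖ ≤ EN := by
    intro k m
    have hqm : 0 < q m := lt_of_lt_of_le hqmin (hq m).1
    have hqqm : ‖((qq * q m : ℝ):ℂ)‖ ≤ 1 := by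
      rw [Complex.norm_real, Real.norm_eq_abs, abs_of_nonneg (by positivity)]
      have h1 : qq * q m ≤ qq * qmax := mul_le_mul_of_nonneg_left (hq m).2 hqq0.le
      linarith
    have hd : Dm k m - Diag k m
        = ((qq * q m:ℝ):ℂ) * ((if k = m then 1 else 0) - (t:ℂ) * g k m) := by
      rw [hDme k m, hDiag]
      by_cases h : k = m
      · subst h
        rw [Matrix.diagonal_apply_eq]
        simp only [if_pos rfl]
        push_cast
        ring
      · rw [Matrix.diagonal_apply_ne _ h]
        simp only [if_neg h]
        ring
    rw [hd, norm_mul]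
    exact (mul_le_mul hqqm (hscal k m) (norm_nonneg _) zero_le_one).trans_eq (one_mul EN)
  have hDiagE : ∀ k m, ‖Diag k m‖ ≤ 1 := by
    intro k m
    rw [hDiag]
    by_cases h : k = m
    · subst h
      rw [Matrix.diagonal_apply_eq, Complex.norm_real, Real.norm_eq_abs,
        abs_of_nonneg (by linarith [(hfac k).1])]
      exact (hfac k).2
    · rw [Matrix.diagonal_apply_ne _ h]; simp
  have hdet0 := det_sub_det_bound' Dm Diag 1 EN le_rfl hEN0 hDiagE hentry
  have hmono : (N:ℝ) ^ (-(1:ℝ)/3 - ε/2) ≤ (N:ℝ) ^ (-(1:ℝ)/12) :=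
    Real.rpow_le_rpow_of_exponent_le hN1R (by linarith)
  have hEN1 : EN ≤ 1 := by
    have h1 : EN ≤ C₀ * (N:ℝ)^(-(1:ℝ)/12) := by
      rw [hENdef]; exact mul_le_mul_of_nonneg_left hmono hC₀0.le
    have h2 : C₀ * (N:ℝ)^(-(1:ℝ)/12) ≤ K'' * (N:ℝ)^(-(1:ℝ)/12) := by
      refine mul_le_mul_of_nonneg_right ?_ (by positivity)
      rw [hK''def]; linarith
    have h3 : ((2:ℝ)^(ℓ+1))⁻¹ ≤ 1 := by
      rw [inv_le_one_iff₀]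
      right
      exact one_le_pow₀ (by norm_num)
    linarith
  have hE1 : ‖Dm.det - ((P:ℝ):ℂ)‖ ≤ K' * ((N:ℝ)^(-(1:ℝ)/3 - ε/2)) := by
    rw [← hDiagdet]
    refine hdet0.trans ?_
    have hp : (1 + EN)^ℓ ≤ 2^ℓ := pow_le_pow_left₀ (by positivity) (by linarith) ℓ
    calc (ℓ.factorial:ℝ) * ℓ * EN * (1+EN)^ℓ ≤ (ℓ.factorial:ℝ) * ℓ * EN * 2^ℓ := by
          exact mul_le_mul_of_nonneg_left hp (by positivity)
      _ = K' * ((N:ℝ)^(-(1:ℝ)/3 - ε/2)) := by rw [hK'def, hENdef]; ring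
  have hsplitN : (N:ℝ)^(-(1:ℝ)/3 - ε/2) ≤ (N:ℝ)^(-(1:ℝ)/12) * (N:ℝ)^(-(1:ℝ)/4) := by
    rw [← Real.rpow_add hNpos]
    exact Real.rpow_le_rpow_of_exponent_le hN1R (by linarith)
  have hE2 : ‖Dm.det - ((P:ℝ):ℂ)‖ ≤ ((2:ℝ)^(ℓ+1))⁻¹ * (N:ℝ)^(-(1:ℝ)/4) := by
    refine hE1.trans ?_
    calc K' * ((N:ℝ)^(-(1:ℝ)/3 - ε/2)) ≤ K' * ((N:ℝ)^(-(1:ℝ)/12) * (N:ℝ)^(-(1:ℝ)/4)) :=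
          mul_le_mul_of_nonneg_left hsplitN hK'0
      _ = (K' * (N:ℝ)^(-(1:ℝ)/12)) * (N:ℝ)^(-(1:ℝ)/4) := by ring
      _ ≤ ((2:ℝ)^(ℓ+1))⁻¹ * (N:ℝ)^(-(1:ℝ)/4) := by
          refine mul_le_mul_of_nonneg_right ?_ (by positivity)
          have h1 : K' * (N:ℝ)^(-(1:ℝ)/12) ≤ K'' * (N:ℝ)^(-(1:ℝ)/12) :=
            mul_le_mul_of_nonneg_right (by rw [hK''def]; linarith) (by positivity)
          linarith
  have hNq1 : (N:ℝ)^(-(1:ℝ)/4) ≤ 1 :=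
    Real.rpow_le_one_of_one_le_of_nonpos hN1R (by norm_num)
  have h2P : ((2:ℝ)^(ℓ+1))⁻¹ ≤ P / 2 := by
    have h1 : ((2:ℝ)^(ℓ+1))⁻¹ = ((2:ℝ)^ℓ)⁻¹ / 2 := by
      rw [pow_succ]
      rw [mul_inv]
      ring
    rw [h1]; linarith
  have hEP : ‖Dm.det - ((P:ℝ):ℂ)‖ ≤ P/2 := by
    refine hE2.trans ?_
    calc ((2:ℝ)^(ℓ+1))⁻¹ * (N:ℝ)^(-(1:ℝ)/4) ≤ ((2:ℝ)^(ℓ+1))⁻¹ * 1 :=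
        mul_le_mul_of_nonneg_left hNq1 (by positivity)
      _ = ((2:ℝ)^(ℓ+1))⁻¹ := mul_one _
      _ ≤ P/2 := h2P
  have hPn : ‖((P:ℝ):ℂ)‖ = P := by
    rw [Complex.norm_real, Real.norm_eq_abs, abs_of_pos hPpos]
  have hzlb : P/2 ≤ ‖Dm.det‖ := by
    have h2 := norm_sub_norm_le ((P:ℝ):ℂ) Dm.det
    rw [hPn, norm_sub_rev] at h2
    linarith
  have hdpos : 0 < ‖Dm.det‖ := by linarith
  have hzne : Dm.det ≠ 0 := by
    intro h
    rw [h, norm_zero] at hdpos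
    linarith
  have hPneC : (((P:ℝ)):ℂ) ≠ 0 := by
    simp only [ne_eq, Complex.ofReal_eq_zero]
    exact hPpos.ne'
  have hprodinv : (∏ k, (1 - qq * q k)⁻¹ : ℝ) = P⁻¹ := by
    rw [hPdef, ← Finset.prod_inv_distrib]
  rw [claim2, hprodinv]
  have heq : (Dm.det)⁻¹ - ((P⁻¹:ℝ):ℂ) = (((P:ℝ):ℂ) - Dm.det) / (Dm.det * ((P:ℝ):ℂ)) := by
    push_cast
    exact inv_sub_inv hzne hPneC
  rw [heq, norm_div, norm_mul, hPn, norm_sub_rev]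
  rw [div_le_iff₀ (mul_pos hdpos hPpos)]
  rw [show (-(1/4:ℝ)) = (-(1:ℝ)/4) from by norm_num]
  have hstep : (1 * (N:ℝ)^(-(1:ℝ)/4) * P⁻¹) * ((P/2) * P)
      ≤ (1 * (N:ℝ)^(-(1:ℝ)/4) * P⁻¹) * (‖Dm.det‖ * P) := by
    have hnn : (0:ℝ) ≤ 1 * (N:ℝ)^(-(1:ℝ)/4) * P⁻¹ := by positivity
    refine mul_le_mul_of_nonneg_left ?_ hnn
    exact mul_le_mul_of_nonneg_right hzlb hPpos.le
  refine le_trans ?_ hstep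
  have hval : (1 * (N:ℝ)^(-(1:ℝ)/4) * P⁻¹) * ((P/2) * P) = (N:ℝ)^(-(1:ℝ)/4) * (P/2) := by
    field_simp
  rw [hval]
  refine hE2.trans ?_
  have h6 := mul_le_mul_of_nonneg_right h2P (by positivity : (0:ℝ) ≤ (N:ℝ)^(-(1:ℝ)/4))
  linarith [h6, mul_comm ((N:ℝ)^(-(1:ℝ)/4)) (P/2)]


end
end
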